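/- arXiv:2507.03634 — 5 statements merged into one kernel-verified Lean document; each statement's English description precedes it below -/
import Mathlib

section
/- Let a ∈ ℝ, γ > 0, C̄ ∈ ℝ, and let η > 0 satisfy η·exp(η) = exp(a + γ·C̄ - 1). Set C* = -(η - γ·C̄ + 1)/γ. Then the expected savings at the optimal compensation satisfy (C̄ - C*)/(1 + exp(-(a + γ·C*))) = η/γ. -/
/-- expected savings at the optimal compensation equal `η/γ`. -/
theorem expected_savings_at_optimum
    (a γ Cbar η : ℝ) (hγ : 0 < γ) (hη : 0 < η)
    (hW : η * Real.exp η = Real.exp (a + γ * Cbar - 1)) :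
    (Cbar - (-(η - γ * Cbar + 1) / γ)) /
        (1 + Real.exp (-(a + γ * (-(η - γ * Cbar + 1) / γ)))) = η / γ := by
  have hγ0 : γ ≠ 0 := ne_of_gt hγ
  have harg : a + γ * (-(η - γ * Cbar + 1) / γ) = a + γ * Cbar - 1 - η := by
    field_simp; ring
  have hexp : Real.exp (-(a + γ * (-(η - γ * Cbar + 1) / γ))) = 1 / η := by
    rw [harg, show -(a + γ * Cbar - 1 - η) = η - (a + γ * Cbar - 1) by ring,
      Real.exp_sub, ← hW]
    field_simp [Real.exp_ne_zero, ne_of_gt hη]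
  rw [hexp]
  have hη0 : η ≠ 0 := ne_of_gt hη
  have h1 : (1 : ℝ) + 1 / η = (η + 1) / η := by field_simp
  have h2 : Cbar - (-(η - γ * Cbar + 1) / γ) = (η + 1) / γ := by field_simp; ring
  rw [h1, h2]; rw [div_div_div_eq]; rw [mul_comm γ (η+1)]; rw [mul_div_mul_left _ _ (by positivity : η+1 ≠ 0)]
end

section
/- Let a ∈ ℝ, γ > 0, C̄ ∈ ℝ, and let η > 0 satisfy η·exp(η) = exp(a + γ·C̄ - 1). Set C* = -(η - γ·C̄ + 1)/γ. Then for every C ∈ ℝ, (C̄ - C)/(1 + exp(-(a + γ·C))) ≤ (C̄ - C*)/(1 + exp(-(a + γ·C*))); that is, C* is a global maximizer of the expected savings function. -/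
/-- `C* = -(η - γC̄ + 1)/γ` is a global maximizer of expected savings. -/
theorem optimal_compensation_is_global_maximizer
    (a γ Cbar η : ℝ) (hγ : 0 < γ) (hη : 0 < η)
    (hW : η * Real.exp η = Real.exp (a + γ * Cbar - 1)) :
    ∀ C : ℝ,
      (Cbar - C) / (1 + Real.exp (-(a + γ * C))) ≤
        (Cbar - (-(η - γ * Cbar + 1) / γ)) /
          (1 + Real.exp (-(a + γ * (-(η - γ * Cbar + 1) / γ)))) := by
  intro C
  have hγ' : γ ≠ 0 := hγ.ne'
  have hlog : Real.log η + η = a + γ * Cbar - 1 := by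
    have h := congrArg Real.log hW
    rwa [Real.log_mul hη.ne' (Real.exp_pos η).ne', Real.log_exp, Real.log_exp] at h
  have hstar : a + γ * (-(η - γ * Cbar + 1) / γ) = Real.log η := by
    field_simp; ring
    linarith
  have hCstar : Cbar - (-(η - γ * Cbar + 1) / γ) = (η + 1) / γ := by
    field_simp; ring
  have hRHS : (Cbar - (-(η - γ * Cbar + 1) / γ)) /
      (1 + Real.exp (-(a + γ * (-(η - γ * Cbar + 1) / γ)))) = η / γ := by
    rw [hstar, hCstar, Real.exp_neg, Real.exp_log hη]
    rw [div_div, div_eq_div_iff (by positivity) hγ']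
    field_simp
  rw [hRHS]
  have hpos : 0 < 1 + Real.exp (-(a + γ * C)) := by positivity
  rw [div_le_iff₀ hpos, div_mul_eq_mul_div, le_div_iff₀ hγ]
  have key : (Real.log η - (a + γ * C)) + 1 ≤ Real.exp (Real.log η - (a + γ * C)) :=
    Real.add_one_le_exp _
  have hexp : Real.exp (Real.log η - (a + γ * C)) = η * Real.exp (-(a + γ * C)) := by
    rw [sub_eq_add_neg, Real.exp_add, Real.exp_log hη]
  rw [hexp] at key
  nlinarith [Real.exp_pos (-(a + γ * C))]
end

section
/- Let α, β₁ < 0, β₂ < 0 be reals, γ > 0, and μ, π̂, Ĉ ≥ 0 with γ·(π̂ + μ) > 0. Let b̂ ∈ ℝ and define Δ̄ = (ln(γ·(π̂ + μ)) + γ·(π̂ + μ - Ĉ) - α - β₂·b̂ + 1)/β₁. Then for any Δ ∈ ℝ with Δ ≥ Δ̄ (note β₁ < 0, so larger detours give smaller predictor values), the quantity ĉ = w/γ - π̂ - μ, where w > 0 satisfies w·exp(w) = exp(α + β₁·Δ + β₂·b̂ + γ·Ĉ - 1), is nonpositive: ĉ ≤ 0. -/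
/-- detours at or above the threshold `Δ̄` force nonpositive reduced cost. -/
theorem detour_based_pruning
    (α β₁ β₂ γ μ πhat Chat bhat Δ w : ℝ)
    (hα : α < 0) (hβ₁ : β₁ < 0) (hβ₂ : β₂ < 0) (hγ : 0 < γ)
    (hμ : 0 ≤ μ) (hπ : 0 ≤ πhat) (hC : 0 ≤ Chat)
    (hpos : 0 < γ * (πhat + μ))
    (hΔ : Δ ≥ (Real.log (γ * (πhat + μ)) + γ * (πhat + μ - Chat) - α - β₂ * bhat + 1) / β₁)
    (hw : 0 < w)
    (hweq : w * Real.exp w = Real.exp (α + β₁ * Δ + β₂ * bhat + γ * Chat - 1)) :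
    w / γ - πhat - μ ≤ 0 := by
  set t := γ * (πhat + μ) with ht
  have hβΔ : β₁ * Δ ≤ Real.log t + t - γ * Chat - α - β₂ * bhat + 1 := by
    have := (div_le_iff_of_neg hβ₁).mp hΔ
    nlinarith
  have hexp : α + β₁ * Δ + β₂ * bhat + γ * Chat - 1 ≤ Real.log t + t := by linarith
  have hle : w * Real.exp w ≤ t * Real.exp t := by
    rw [hweq]
    calc Real.exp (α + β₁ * Δ + β₂ * bhat + γ * Chat - 1)
        ≤ Real.exp (Real.log t + t) := Real.exp_le_exp.mpr hexp
      _ = t * Real.exp t := by rw [Real.exp_add, Real.exp_log hpos]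
  have hwt : w ≤ t := by
    by_contra h
    push_neg at h
    have h1 : Real.exp t < Real.exp w := Real.exp_lt_exp.mpr h
    nlinarith [Real.exp_pos t, Real.exp_pos w]
  have : w / γ ≤ πhat + μ := by
    rw [div_le_iff₀ hγ]; nlinarith
  linarith
end

section
/- Let a ∈ ℝ, γ > 0. The function h(C̄) = W(exp(a + γ·C̄ - 1)) - γ·C̄ + 1 is such that the optimal compensation C*(C̄) = -h(C̄)/γ is strictly increasing in C̄, where W is the principal Lambert W function. Equivalently: if C̄₁ < C̄₂ and ηᵢ > 0 satisfy ηᵢ·exp(ηᵢ) = exp(a + γ·C̄ᵢ - 1), then -(η₁ - γ·C̄₁ + 1)/γ < -(η₂ - γ·C̄₂ + 1)/γ. -/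
/-- the optimal compensation is strictly increasing in the 3PL cost. -/
theorem optimal_compensation_strictMono_in_cost
    (a γ Cbar₁ Cbar₂ η₁ η₂ : ℝ) (hγ : 0 < γ) (hC : Cbar₁ < Cbar₂)
    (hη₁ : 0 < η₁) (hη₂ : 0 < η₂)
    (h₁ : η₁ * Real.exp η₁ = Real.exp (a + γ * Cbar₁ - 1))
    (h₂ : η₂ * Real.exp η₂ = Real.exp (a + γ * Cbar₂ - 1)) :
    -(η₁ - γ * Cbar₁ + 1) / γ < -(η₂ - γ * Cbar₂ + 1) / γ := by
  have hlog₁ : Real.log η₁ + η₁ = a + γ * Cbar₁ - 1 := by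
    have := congrArg Real.log h₁
    rwa [Real.log_mul (ne_of_gt hη₁) (Real.exp_ne_zero _), Real.log_exp,
      Real.log_exp] at this
  have hlog₂ : Real.log η₂ + η₂ = a + γ * Cbar₂ - 1 := by
    have := congrArg Real.log h₂
    rwa [Real.log_mul (ne_of_gt hη₂) (Real.exp_ne_zero _), Real.log_exp,
      Real.log_exp] at this
  have hηlt : η₁ < η₂ := by
    by_contra h
    push_neg at h
    have h1 : η₂ * Real.exp η₂ ≤ η₁ * Real.exp η₁ :=
      mul_le_mul h (Real.exp_le_exp.2 h) (le_of_lt (Real.exp_pos _)) (le_of_lt hη₁)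
    rw [h₁, h₂] at h1
    have : a + γ * Cbar₁ - 1 < a + γ * Cbar₂ - 1 := by nlinarith
    exact absurd (Real.exp_le_exp.1 h1) (not_le.2 this)
  have hloglt : Real.log η₁ < Real.log η₂ := Real.log_lt_log hη₁ hηlt
  have key : η₂ - γ * Cbar₂ < η₁ - γ * Cbar₁ := by linarith
  have : -(η₁ - γ * Cbar₁ + 1) < -(η₂ - γ * Cbar₂ + 1) := by linarith
  exact div_lt_div_of_pos_right this hγ
end

section
/- Let a ∈ ℝ, γ > 0, C̄ > 0, η > 0 with η·exp(η) = exp(a + γ·C̄ - 1). If the pruning bound satisfies η/γ ≤ π + μ for given π, μ ≥ 0, then for every compensation C ∈ ℝ, (C̄ - C)/(1 + exp(-(a + γ·C))) - π - μ ≤ 0. -/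
/-- reduced-cost-based label pruning: if `η/γ ≤ π + μ`, then the
reduced cost is nonpositive for every compensation. -/
theorem reduced_cost_pruning
    (a γ Cbar η π μ : ℝ) (hγ : 0 < γ) (hCbar : 0 < Cbar) (hη : 0 < η)
    (hW : η * Real.exp η = Real.exp (a + γ * Cbar - 1))
    (hπ : 0 ≤ π) (hμ : 0 ≤ μ) (hbound : η / γ ≤ π + μ) :
    ∀ C : ℝ, (Cbar - C) / (1 + Real.exp (-(a + γ * C))) - π - μ ≤ 0 := by
  intro C
  set x := a + γ * C with hx
  have hden : (0:ℝ) < 1 + Real.exp (-x) := by positivity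
  have hlog : Real.log η + η = a + γ * Cbar - 1 := by
    have := congrArg Real.log hW
    rwa [Real.log_mul (ne_of_gt hη) (Real.exp_ne_zero _), Real.log_exp,
      Real.log_exp] at this
  have hexp : 1 + (Real.log η - x) ≤ Real.exp (Real.log η - x) := by
    have := Real.add_one_le_exp (Real.log η - x); linarith
  have hexp' : Real.exp (Real.log η - x) = η * Real.exp (-x) := by
    rw [sub_eq_add_neg, Real.exp_add, Real.exp_log hη]
  have key : (Cbar - C) * γ ≤ η * (1 + Real.exp (-x)) := by
    have h1 : (Cbar - C) * γ = Real.log η + η + 1 - x := by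
      have : γ * Cbar = Real.log η + η + 1 - a := by linarith
      rw [hx]; ring_nf; nlinarith [this]
    rw [h1, mul_add, mul_one, ← hexp']
    linarith
  have hmain : (Cbar - C) / (1 + Real.exp (-x)) ≤ η / γ :=
    (div_le_div_iff₀ hden hγ).mpr key
  linarith
end
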